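/- Let H be a digraph, let R be a closed reduced walk of even length in H based at a vertex h, and let P be a reduced walk of even length in H starting at h. If R satisfies the IN-zigzag pattern, then P satisfies the IN-zigzag pattern if and only if every reduced walk RⁿP ∈ π(H), n ∈ ℤ, satisfies the IN-zigzag pattern. (The analogous statement holds for the OUT-zigzag pattern.) -/

import Mathlib

namespace HRecoloring

/-- A digraph: a vertex type together with an arc relation. -/
structure Dgraph (V : Type) where
  Adj : V → V → Prop

variable {V X : Type}

/-- Adjacency in the underlying undirected graph. -/
def Dgraph.UAdj (G : Dgraph V) (u v : V) : Prop := G.Adj u v ∨ G.Adj v u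

/-- A digraph is loopless if it has no arc `v → v`. -/
def Dgraph.Loopless (G : Dgraph V) : Prop := ∀ v, ¬ G.Adj v v

/-- A digraph is reflexive if `v → v` for every vertex `v`. -/
def Dgraph.IsReflexive (G : Dgraph V) : Prop := ∀ v, G.Adj v v

/-- A symmetric digraph, which we identify with an undirected graph. -/
def Dgraph.IsSymmetric (G : Dgraph V) : Prop := ∀ u v, G.Adj u v → G.Adj v u

/-- The underlying undirected graph, as a symmetric digraph. -/
def Dgraph.usym (G : Dgraph V) : Dgraph V := ⟨fun u v => G.UAdj u v⟩

/-- A (di)graph homomorphism. -/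
def IsHom (G : Dgraph V) (H : Dgraph X) (f : V → X) : Prop :=
  ∀ ⦃u v⦄, G.Adj u v → H.Adj (f u) (f v)

/-- A walk from `a` to `b`, encoded by its list of successive vertices.
A walk in a digraph is a walk in its underlying undirected graph. -/
def IsWalk (G : Dgraph V) (a b : V) (l : List V) : Prop :=
  l ≠ [] ∧ l.head? = some a ∧ l.getLast? = some b ∧ l.Chain' G.UAdj

/-- Weak connectivity. -/
def Dgraph.WConn (G : Dgraph V) : Prop := ∀ u v : V, ∃ l, IsWalk G u v l

/-- Concatenation of two walks sharing an endpoint. -/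
def wcomp (l₁ l₂ : List V) : List V := l₁ ++ l₂.tail

/-- Number of edges of a walk. -/
def wlen (l : List V) : ℕ := l.length - 1

/-- One reduction step on walks: delete a backtracking pair `(x y)(y x)` or a
one-edge loop step `(x x)`. -/
def RStep (l l' : List V) : Prop :=
  (∃ (p s : List V) (x y : V), l = p ++ [x, y, x] ++ s ∧ l' = p ++ [x] ++ s) ∨
  (∃ (p s : List V) (x : V), l = p ++ [x, x] ++ s ∧ l' = p ++ [x] ++ s)

/-- Equality of walks in the fundamental groupoid `π(H)`: the equivalence
generated by reduction steps (two walks are equal in `π(H)` iff they reduce to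
the same reduced walk). -/
def PiEq (l l' : List V) : Prop := Relation.EqvGen RStep l l'

/-- A walk is reduced if no reduction step applies to it. -/
def IsReduced (l : List V) : Prop := ∀ l', ¬ RStep l l'

/-- A closed walk is cyclically reduced if it is reduced and its first and last
edges are not inverses of each other. -/
def IsCycReduced (l : List V) : Prop :=
  IsReduced l ∧ ∃ h : 2 ≤ l.length,
    l.get ⟨1, by omega⟩ ≠ l.get ⟨l.length - 2, by omega⟩

/-- `n`-fold concatenation of a closed walk `R` based at `h`. -/
def witer (R : List V) (h : V) : ℕ → List V
  | 0 => [h]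
  | n + 1 => wcomp R (witer R h n)

/-- `Rⁿ` for an integer `n`, for a closed walk `R` based at `h`; for `n < 0`
this is the `|n|`-fold concatenation of the reversed walk `R⁻¹`. -/
def zpowWalk (R : List V) (h : V) (n : ℤ) : List V :=
  if 0 ≤ n then witer R h n.toNat else witer R.reverse h (-n).toNat

/-- A walk is symmetric if every edge it traverses is a symmetric arc. -/
def IsSymWalk (H : Dgraph X) (l : List X) : Prop :=
  l.Chain' fun a b => H.Adj a b ∧ H.Adj b a

/-- The conjugated walk `α(W)⁻¹ · Q · β(W)`. -/
def conj (α β : V → X) (Wl : List V) (Q : List X) : List X :=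
  wcomp (wcomp (Wl.map α).reverse Q) (Wl.map β)

/-- Topological validity of a walk `Q` from `α q` to `β q`:
`β(C) = Q⁻¹ · α(C) · Q` in `π(H)` for every closed walk `C` at `q`. -/
def TopValid (G : Dgraph V) (H : Dgraph X) (α β : V → X) (q : V) (Q : List X) : Prop :=
  ∀ C : List V, IsWalk G q q C →
    PiEq (C.map β) (wcomp (wcomp Q.reverse (C.map α)) Q)

/-- IN-zigzag pattern `a₁ ← a₂ → a₃ ← … ← a_{n-1} → a_n`. -/
def INCompatible (H : Dgraph X) (l : List X) : Prop :=
  ∀ (i : ℕ) (h : i + 1 < l.length),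
    if i % 2 = 0 then H.Adj (l.get ⟨i + 1, h⟩) (l.get ⟨i, by omega⟩)
    else H.Adj (l.get ⟨i, by omega⟩) (l.get ⟨i + 1, h⟩)

/-- OUT-zigzag pattern `a₁ → a₂ ← a₃ → … → a_{n-1} ← a_n`. -/
def OUTCompatible (H : Dgraph X) (l : List X) : Prop :=
  ∀ (i : ℕ) (h : i + 1 < l.length),
    if i % 2 = 0 then H.Adj (l.get ⟨i, by omega⟩) (l.get ⟨i + 1, h⟩)
    else H.Adj (l.get ⟨i + 1, h⟩) (l.get ⟨i, by omega⟩)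

/-- A vertex is of type IN if it has an in-neighbor. -/
def TypeIN (G : Dgraph V) (v : V) : Prop := ∃ u, G.Adj u v

/-- A vertex is of type OUT if it has an out-neighbor. -/
def TypeOUT (G : Dgraph V) (v : V) : Prop := ∃ u, G.Adj v u

/-- A vertex is of type SYM if it is of type IN and of type OUT. -/
def TypeSYM (G : Dgraph V) (v : V) : Prop := TypeIN G v ∧ TypeOUT G v

/-- The zigzag condition for the vertex `v`. -/
def Zigzag (G : Dgraph V) (H : Dgraph X) (v : V) (l : List X) : Prop :=
  (TypeIN G v → INCompatible H l) ∧ (TypeOUT G v → OUTCompatible H l)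

/-- A recoloring sequence: a nonempty sequence of homomorphisms in which
consecutive homomorphisms differ on exactly one vertex. -/
def IsRecolSeq (G : Dgraph V) (H : Dgraph X) (σs : List (V → X)) : Prop :=
  σs ≠ [] ∧ (∀ σ ∈ σs, IsHom G H σ) ∧ σs.Chain' fun σ σ' => ∃! u, σ u ≠ σ' u

/-- The monochromatic neighborhood property: whenever a vertex changes its
color, all of its neighbors (in the underlying undirected graph) have one
common color. -/
def MonoNbhd (G : Dgraph V) (σs : List (V → X)) : Prop :=
  σs.Chain' fun σ σ' => ∀ v, σ v ≠ σ' v → ∃ h, ∀ w, G.UAdj v w → σ w = h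

/-- `VWalk G v σs S`: `S` is the vertex walk `S(v)` of the recoloring sequence
`σs`; each color change of `v` from `a` to `b`, while all neighbors of `v` are
colored `h`, contributes the two edges `(a h)(h b)`. -/
inductive VWalk (G : Dgraph V) (v : V) : List (V → X) → List X → Prop
  | single (σ : V → X) : VWalk G v [σ] [σ v]
  | stay {σ σ' : V → X} {rest : List (V → X)} {l : List X} :
      σ v = σ' v → VWalk G v (σ' :: rest) l → VWalk G v (σ :: σ' :: rest) l
  | move {σ σ' : V → X} {rest : List (V → X)} {l : List X} (h : X) :
      σ v ≠ σ' v → (∀ w, G.UAdj v w → σ w = h) →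
      VWalk G v (σ' :: rest) l → VWalk G v (σ :: σ' :: rest) (σ v :: h :: l)

/-- `H`-realizability of a walk `Q` via recoloring sequences satisfying the
monochromatic neighborhood property: `Q = S(q)` in `π(H)`. -/
def MRealizable (G : Dgraph V) (H : Dgraph X) (α β : V → X) (q : V) (Q : List X) : Prop :=
  ∃ (σs : List (V → X)) (Sq : List X),
    IsRecolSeq G H σs ∧ σs.head? = some α ∧ σs.getLast? = some β ∧
    MonoNbhd G σs ∧ VWalk G q σs Sq ∧ PiEq Sq Q

/-- Orientation compatibility of a walk `Q`: every generated vertex walk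
satisfies the zigzag condition. -/
def OrientCompatible (G : Dgraph V) (H : Dgraph X) (α β : V → X) (q : V) (Q : List X) : Prop :=
  ∀ (v : V) (Wl : List V), IsWalk G q v Wl →
    ∀ S : List X, IsReduced S → PiEq (conj α β Wl Q) S → Zigzag G H v S

/-- Hom₁-adjacency: the homomorphisms differ on exactly one vertex and, for
every arc `x → y` of `G`, both `φ x → ψ y` and `ψ x → φ y` are arcs of `H`. -/
def Hom1Adj (G : Dgraph V) (H : Dgraph X) (φ ψ : V → X) : Prop :=
  (∃! u, φ u ≠ ψ u) ∧ ∀ ⦃x y⦄, G.Adj x y → H.Adj (φ x) (ψ y) ∧ H.Adj (ψ x) (φ y)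

/-- A recoloring sequence in the Hom₁ sense (digraphs). -/
def Hom1Seq (G : Dgraph V) (H : Dgraph X) (σs : List (V → X)) : Prop :=
  σs ≠ [] ∧ (∀ σ ∈ σs, IsHom G H σ) ∧ σs.Chain' (Hom1Adj G H)

/-- A recoloring sequence in which each step recolors exactly one vertex to an
adjacent color (the Hom₁ sense for reflexive undirected graphs). -/
def AdjRecolSeq (G : Dgraph V) (H : Dgraph X) (σs : List (V → X)) : Prop :=
  σs ≠ [] ∧ (∀ σ ∈ σs, IsHom G H σ) ∧
  σs.Chain' fun σ σ' => (∃! u, σ u ≠ σ' u) ∧ ∀ u, σ u ≠ σ' u → H.Adj (σ u) (σ' u)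

/-- The push-or-pull property: whenever a vertex changes its color from `a` to
`b`, every neighbor of that vertex has color `a` or `b`. -/
def PushOrPull (G : Dgraph V) (σs : List (V → X)) : Prop :=
  σs.Chain' fun σ σ' => ∀ u, σ u ≠ σ' u → ∀ w, G.UAdj u w → σ w = σ u ∨ σ w = σ' u

/-- The walk of successive colors of `v` along a recoloring sequence. -/
def colorWalk (σs : List (V → X)) (v : V) : List X := σs.map fun σ => σ v

/-- `H`-realizability via recoloring sequences (reflexive undirected Hom₁
sense) satisfying the push-or-pull property. -/
def PRealizable (G : Dgraph V) (H : Dgraph X) (α β : V → X) (q : V) (Q : List X) : Prop :=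
  ∃ σs : List (V → X), AdjRecolSeq G H σs ∧ σs.head? = some α ∧ σs.getLast? = some β ∧
    PushOrPull G σs ∧ PiEq (colorWalk σs q) Q

/-- `H`-realizability via Hom₁ recoloring sequences of digraphs satisfying the
push-or-pull property. -/
def DRealizable (G : Dgraph V) (H : Dgraph X) (α β : V → X) (q : V) (Q : List X) : Prop :=
  ∃ σs : List (V → X), Hom1Seq G H σs ∧ σs.head? = some α ∧ σs.getLast? = some β ∧
    PushOrPull G σs ∧ PiEq (colorWalk σs q) Q

/-- `H` contains no 4-cycle of algebraic girth 0 as a subgraph (neither of the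
two orientations of the 4-cycle with two forward and two backward arcs). -/
def NoZeroGirthC4 (H : Dgraph X) : Prop :=
  ∀ a b c d : X, a ≠ b → a ≠ c → a ≠ d → b ≠ c → b ≠ d → c ≠ d →
    ¬(H.Adj a b ∧ H.Adj b d ∧ H.Adj a c ∧ H.Adj c d) ∧
    ¬(H.Adj a b ∧ H.Adj d b ∧ H.Adj a c ∧ H.Adj d c)

/-- `H` contains no triangle of algebraic girth 1 as a subgraph. -/
def NoOneGirthTriangle (H : Dgraph X) : Prop :=
  ∀ x y z : X, x ≠ y → y ≠ z → x ≠ z → ¬(H.Adj x y ∧ H.Adj y z ∧ H.Adj x z)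

/-- A path in the reconfiguration graph `R_H(G)` from `α` to `β`. -/
def IsRPath (G : Dgraph V) (H : Dgraph X) (α β : V → X) (L : List (V → X)) : Prop :=
  L ≠ [] ∧ L.head? = some α ∧ L.getLast? = some β ∧
  (∀ σ ∈ L, IsHom G H σ) ∧ L.Chain' fun φ ψ => ∃! u, φ u ≠ ψ u

/-- A path in the graph `Hom₁(G, H)` from `α` to `β`. -/
def IsHom1Path (G : Dgraph V) (H : Dgraph X) (α β : V → X) (L : List (V → X)) : Prop :=
  L ≠ [] ∧ L.head? = some α ∧ L.getLast? = some β ∧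
  (∀ σ ∈ L, IsHom G H σ) ∧ L.Chain' (Hom1Adj G H)

/-- The set of reduced walks `Q` from `α q` to `β q` that generate symmetric
vertex walks on `V'` with the system of walks `Wf`. -/
def SymGenSet (H : Dgraph X) (α β : V → X) (q : V)
    (V' : Set V) (Wf : V → List V) : Set (List X) :=
  {Q | IsWalk H (α q) (β q) Q ∧ IsReduced Q ∧
    ∀ v ∈ V', ∀ S : List X, IsReduced S → PiEq (conj α β (Wf v) Q) S → IsSymWalk H S}

/-- The set of orientation-compatible walks for `q` and the system `Uf`. -/
def OCSet (G : Dgraph V) (H : Dgraph X) (α β : V → X) (q : V)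
    (Uf : V → List V) : Set (List X) :=
  {Q | IsWalk H (α q) (β q) Q ∧ IsReduced Q ∧ Even (wlen Q) ∧
    ∀ (v : V) (S : List X), IsReduced S → PiEq (conj α β (Uf v) Q) S → Zigzag G H v S}

/-- The set `Π_q` of walks from `α q` to `β q` that are `H`-realizable via
recoloring sequences satisfying the monochromatic neighborhood property. -/
def MRealSet (G : Dgraph V) (H : Dgraph X) (α β : V → X) (q : V) : Set (List X) :=
  {Q | IsWalk H (α q) (β q) Q ∧ IsReduced Q ∧ MRealizable G H α β q Q}

/-- The set of walks from `α q` to `β q` that are `H`-realizable via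
recoloring sequences satisfying the push-or-pull property. -/
def PRealSet (G : Dgraph V) (H : Dgraph X) (α β : V → X) (q : V) : Set (List X) :=
  {Q | IsWalk H (α q) (β q) Q ∧ IsReduced Q ∧ PRealizable G H α β q Q}

/-- Ceiling division on natural numbers. -/
def cdiv (a b : ℕ) : ℕ := (a + b - 1) / b

end HRecoloring

open HRecoloring

/-!
An IN-zigzag walk of even length is a concatenation of peaks `a ← b → c`, so IN-zigzag walks
of even length are closed under concatenation and reversal; hence `RⁿP` is IN-zigzag for every
`n` when `R` and `P` are. Reducing a walk only deletes backtracks `(x y)(y x)` (a loop step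
`(x x)` cannot occur in a zigzag walk of a loopless digraph), and deleting two consecutive edges
preserves the zigzag pattern. Reductions are confluent, so a reduced walk equal to `RⁿP` in
`π(H)` is obtained from `RⁿP` by reductions alone and is therefore IN-zigzag. Conversely take
`n = 0`. The OUT-zigzag pattern of `H` is the IN-zigzag pattern of the converse digraph.
-/

namespace HRecoloring

variable {X : Type}

open Relation

lemma RStep.cons {l l' : List X} (a : X) (h : RStep l l') : RStep (a :: l) (a :: l') := by
  rcases h with ⟨p, s, x, y, rfl, rfl⟩ | ⟨p, s, x, rfl, rfl⟩
  · exact .inl ⟨a :: p, s, x, y, rfl, rfl⟩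
  · exact .inr ⟨a :: p, s, x, rfl, rfl⟩

lemma IsReduced.of_cons {a : X} {l : List X} (h : IsReduced (a :: l)) : IsReduced l :=
  fun _ hl' => h _ (hl'.cons a)

theorem IsReduced.isChain_ne : ∀ {l : List X}, IsReduced l → l.IsChain (· ≠ ·)
  | [], _ | [_], _ => by simp
  | a :: b :: l, h => List.isChain_cons_cons.mpr
      ⟨fun hab => h _ (.inr ⟨[], l, a, by simp [hab], rfl⟩), h.of_cons.isChain_ne⟩

lemma rStep_iff_delete {l l' : List X} :
    RStep l l' ↔ ∃ A u s x, (u = [x] ∨ ∃ y, u = [y, x]) ∧ A.getLast? = some x ∧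
      l = A ++ u ++ s ∧ l' = A ++ s := by
  constructor
  · rintro (⟨p, s, x, y, rfl, rfl⟩ | ⟨p, s, x, rfl, rfl⟩)
    · exact ⟨p ++ [x], [y, x], s, x, .inr ⟨y, rfl⟩, by simp, by simp, by simp⟩
    · exact ⟨p ++ [x], [x], s, x, .inl rfl, by simp, by simp, by simp⟩
  · rintro ⟨A, u, s, x, hu, hA, rfl, rfl⟩
    obtain ⟨p, rfl⟩ := List.getLast?_eq_some_iff.mp hA
    rcases hu with rfl | ⟨y, rfl⟩
    · exact .inr ⟨p, s, x, by simp, by simp⟩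
    · exact .inl ⟨p, s, x, y, by simp, by simp⟩

lemma rStep_delete {A u : List X} (s : List X) {x : X} (hu : u = [x] ∨ ∃ y, u = [y, x])
    (hA : A.getLast? = some x) : RStep (A ++ u ++ s) (A ++ s) :=
  rStep_iff_delete.mpr ⟨A, u, s, x, hu, hA, rfl, rfl⟩

lemma rStep_delete_loop {A : List X} (s : List X) {x : X} (hA : A.getLast? = some x) :
    RStep (A ++ x :: s) (A ++ s) := by
  simpa using rStep_delete s (.inl rfl) hA

lemma getLast?_of_backtrack {u : List X} {x : X} (hu : u = [x] ∨ ∃ y, u = [y, x]) :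
    u.getLast? = some x := by
  rcases hu with rfl | ⟨y, rfl⟩ <;> rfl

lemma rStep_diamond_of_disjoint {A u w v t : List X} {x z : X}
    (hu : u = [x] ∨ ∃ y, u = [y, x]) (hA : A.getLast? = some x)
    (hv : v = [z] ∨ ∃ w, v = [w, z]) (hB : (A ++ u ++ w).getLast? = some z) :
    ∃ d, ReflGen RStep (A ++ (w ++ v ++ t)) d ∧ ReflGen RStep (A ++ (u ++ w) ++ t) d := by
  refine ⟨A ++ w ++ t, .single ?_, .single ?_⟩
  · have : (A ++ w).getLast? = some z := by
      simpa [List.getLast?_append, getLast?_of_backtrack hu, hA] using hB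
    simpa using rStep_delete t hv this
  · simpa using rStep_delete (w ++ t) hu hA

lemma rStep_diamond_of_overlap {A a' u v c s t : List X} {x z c₀ : X}
    (hu : u = [x] ∨ ∃ y, u = [y, x]) (hA : A.getLast? = some x)
    (hv : v = [z] ∨ ∃ w, v = [w, z]) (hB : (A ++ a').getLast? = some z)
    (hac : u = a' ++ c₀ :: c) (hc : v ++ t = c₀ :: c ++ s) :
    ∃ d, ReflGen RStep (A ++ s) d ∧ ReflGen RStep (A ++ a' ++ t) d := by
  -- Six configurations; in each the two results coincide or differ by one loop step `(x x)`.
  rcases hu with rfl | ⟨y, rfl⟩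
  · obtain ⟨ha', hc₀, hc'⟩ : a' = [] ∧ c₀ = x ∧ c = [] := by
      simpa [List.append_eq_cons_iff] using hac.symm
    subst a' c₀ c
    obtain rfl : z = x := by simp_all
    rcases hv with rfl | ⟨w, rfl⟩
    · obtain rfl : t = s := by simpa using hc
      exact ⟨_, .refl, by simpa using .refl⟩
    · obtain ⟨hw, hs⟩ : w = z ∧ z :: t = s := by simpa using hc
      subst w s
      exact ⟨A ++ t, .single (rStep_delete_loop t hA), by simpa using .refl⟩
  · rcases a' with _ | ⟨a₀, _ | ⟨a₁, a'⟩⟩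
    · obtain ⟨hc₀, hc'⟩ : c₀ = y ∧ c = [x] := by simpa [eq_comm] using hac
      subst c₀ c
      obtain rfl : z = x := by simp_all
      rcases hv with rfl | ⟨w, rfl⟩
      · obtain ⟨hy, ht⟩ : z = y ∧ t = z :: s := by simpa using hc
        subst y t
        exact ⟨A ++ s, .refl, by simpa using .single (rStep_delete_loop s hA)⟩
      · obtain ⟨hw, ht⟩ : w = y ∧ t = s := by simpa using hc
        subst w t
        exact ⟨_, .refl, by simpa using .refl⟩
    · obtain ⟨ha₀, hc₀, hc'⟩ : a₀ = y ∧ c₀ = x ∧ c = [] := by simpa [eq_comm] using hac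
      subst a₀ c₀ c
      obtain rfl : z = y := by simpa using hB.symm
      rcases hv with rfl | ⟨w, rfl⟩
      · obtain ⟨hx, ht⟩ : z = x ∧ t = s := by simpa using hc
        subst x t
        exact ⟨A ++ s, .refl, by simpa using .single (rStep_delete_loop s hA)⟩
      · obtain ⟨hw, hs⟩ : w = x ∧ z :: t = s := by simpa using hc
        subst w s
        exact ⟨_, .refl, by simpa using .refl⟩
    · simp at hac

lemma rStep_diamond_of_prefix {A a' u v s t : List X} {x z : X}
    (hu : u = [x] ∨ ∃ y, u = [y, x]) (hA : A.getLast? = some x)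
    (hv : v = [z] ∨ ∃ w, v = [w, z]) (hB : (A ++ a').getLast? = some z)
    (h : u ++ s = a' ++ (v ++ t)) :
    ∃ d, ReflGen RStep (A ++ s) d ∧ ReflGen RStep (A ++ a' ++ t) d := by
  rcases List.append_eq_append_iff.mp h with ⟨w, rfl, rfl⟩ | ⟨_ | ⟨c₀, c⟩, hac, hc⟩
  · simpa using rStep_diamond_of_disjoint (t := t) hu hA hv (by simpa using hB)
  · simp only [List.append_nil] at hac hc
    subst hac hc
    simpa using rStep_diamond_of_disjoint (w := []) (t := t) hu hA hv (by simpa using hB)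
  · exact rStep_diamond_of_overlap hu hA hv hB hac hc

lemma rStep_diamond (l l₁ l₂ : List X) (h₁ : RStep l l₁) (h₂ : RStep l l₂) :
    ∃ d, ReflGen RStep l₁ d ∧ ReflTransGen RStep l₂ d := by
  obtain ⟨A, u, s, x, hu, hA, rfl, rfl⟩ := rStep_iff_delete.mp h₁
  obtain ⟨B, v, t, z, hv, hB, h, rfl⟩ := rStep_iff_delete.mp h₂
  simp only [List.append_assoc] at h
  rcases List.append_eq_append_iff.mp h with ⟨a', rfl, h'⟩ | ⟨b', rfl, h'⟩
  · obtain ⟨d, hd₁, hd₂⟩ := rStep_diamond_of_prefix hu hA hv hB h'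
    exact ⟨d, hd₁, hd₂.to_reflTransGen⟩
  · obtain ⟨d, hd₂, hd₁⟩ := rStep_diamond_of_prefix hv hB hu hA h'
    exact ⟨d, hd₁, hd₂.to_reflTransGen⟩

lemma reflTransGen_of_piEq {W Q : List X} (h : PiEq W Q) (hQ : IsReduced Q) :
    ReflTransGen RStep W Q := by
  have hequiv := equivalence_join_reflTransGen (rStep_diamond (X := X))
  obtain ⟨d, hWd, hQd⟩ := hequiv.eqvGen_iff.mp <|
    EqvGen.mono (fun a b hab => ⟨b, .single hab, .refl⟩) W Q h
  rcases hQd.cases_head with rfl | ⟨c, hc, _⟩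
  · exact hWd
  · exact absurd hc (hQ c)

lemma head?_wcomp {l₁ : List X} (l₂ : List X) (h : l₁ ≠ []) :
    (wcomp l₁ l₂).head? = l₁.head? := by
  cases l₁ <;> simp_all [wcomp]

lemma wcomp_assoc (l₁ : List X) {l₂ : List X} (l₃ : List X) (h : l₂ ≠ []) :
    wcomp (wcomp l₁ l₂) l₃ = wcomp l₁ (wcomp l₂ l₃) := by
  cases l₂ <;> simp_all [wcomp]

lemma singleton_wcomp {l : List X} {a : X} (h : l.head? = some a) : wcomp [a] l = l := by
  cases l <;> simp_all [wcomp]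

lemma head?_witer {R : List X} {h : X} (hR : R.head? = some h) :
    ∀ n, (witer R h n).head? = some h
  | 0 => rfl
  | n + 1 => by rw [witer, head?_wcomp _ (by rintro rfl; simp at hR), hR]

def Dgraph.converse (H : Dgraph X) : Dgraph X := ⟨fun a b => H.Adj b a⟩

def Dgraph.dropLoops (H : Dgraph X) : Dgraph X := ⟨fun a b => H.Adj a b ∧ a ≠ b⟩

lemma Dgraph.loopless_dropLoops (H : Dgraph X) : H.dropLoops.Loopless :=
  fun _ h => h.2 rfl

@[simp] lemma Dgraph.converse_converse (H : Dgraph X) : H.converse.converse = H := rfl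

lemma outCompatible_iff_inCompatible_converse {H : Dgraph X} {l : List X} :
    OUTCompatible H l ↔ INCompatible H.converse l := Iff.rfl

lemma inCompatible_nil (H : Dgraph X) : INCompatible H [] := fun _ h => by simp at h

lemma inCompatible_singleton (H : Dgraph X) (a : X) : INCompatible H [a] :=
  fun _ h => by simp at h

lemma inCompatible_cons {H : Dgraph X} {a : X} {l : List X} :
    INCompatible H (a :: l) ↔ (∀ b ∈ l.head?, H.Adj b a) ∧ INCompatible H.converse l := by
  have hpar : ∀ j : ℕ, (j + 1) % 2 = 0 ↔ ¬ j % 2 = 0 := by omega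
  constructor
  · intro h
    refine ⟨fun b hb => ?_, fun j hj => ?_⟩
    · obtain ⟨l, rfl⟩ : ∃ l', l = b :: l' := by
        cases l <;> simp_all
      simpa using h 0 (by simp)
    · have := h (j + 1) (by simpa using hj)
      simp only [List.get_eq_getElem, List.getElem_cons_succ, hpar] at this
      unfold Dgraph.converse
      split_ifs at this ⊢ <;> assumption
  · rintro ⟨hhead, hl⟩ (_ | j) hj
    · cases l with
      | nil => simp at hj
      | cons b l => simpa using hhead b rfl
    · have := hl j (by simpa using hj)
      simp only [List.get_eq_getElem, List.getElem_cons_succ, hpar]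
      unfold Dgraph.converse at this
      split_ifs at this ⊢ <;> assumption

lemma inCompatible_cons_cons_cons {H : Dgraph X} {a b c : X} {l : List X} :
    INCompatible H (a :: b :: c :: l) ↔ H.Adj b a ∧ H.Adj b c ∧ INCompatible H (c :: l) := by
  simp only [inCompatible_cons (l := b :: _), inCompatible_cons (l := c :: _),
    List.head?_cons, Option.mem_def, Option.some.injEq, forall_eq', Dgraph.converse_converse]
  rfl

lemma inCompatible_mono {G H : Dgraph X} (hGH : ∀ a b, G.Adj a b → H.Adj a b) {l : List X}
    (hl : INCompatible G l) : INCompatible H l := by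
  intro i hi
  have := hl i hi
  split_ifs at this ⊢ <;> exact hGH _ _ this

lemma inCompatible_dropLoops {H : Dgraph X} {l : List X} (hl : INCompatible H l)
    (hne : l.IsChain (· ≠ ·)) : INCompatible H.dropLoops l := by
  intro i hi
  have hadj := hl i hi
  have hi' := List.isChain_iff_getElem.mp hne i hi
  split_ifs at hadj ⊢
  · exact ⟨hadj, Ne.symm hi'⟩
  · exact ⟨hadj, hi'⟩

theorem inCompatible_wcomp {H : Dgraph X} :
    ∀ {l₁ l₂ : List X}, INCompatible H l₁ → INCompatible H l₂ → Even (wlen l₁) →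
      l₁.getLast? = l₂.head? → INCompatible H (wcomp l₁ l₂)
  | [], l₂, _, _, _, hlink => by
    obtain rfl : l₂ = [] := by simpa [eq_comm] using hlink
    exact inCompatible_nil H
  | [a], l₂, _, h₂, _, hlink => by
    obtain ⟨l₂, rfl⟩ : ∃ l, l₂ = a :: l := by cases l₂ <;> simp_all
    exact h₂
  | [_, _], _, _, _, he, _ => by simp [wlen] at he
  | a :: b :: c :: l₁, l₂, h₁, h₂, he, hlink => by
    rw [inCompatible_cons_cons_cons] at h₁
    have he' : Even (wlen (c :: l₁)) := by
      simpa [wlen, Nat.even_add_one, parity_simps] using he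
    exact inCompatible_cons_cons_cons.mpr ⟨h₁.1, h₁.2.1,
      inCompatible_wcomp h₁.2.2 h₂ he' (by simpa using hlink)⟩

theorem inCompatible_reverse {H : Dgraph X} :
    ∀ {l : List X}, INCompatible H l → Even (wlen l) → INCompatible H l.reverse
  | [], h, _ | [_], h, _ => h
  | [_, _], _, he => by simp [wlen] at he
  | a :: b :: c :: l, h, he => by
    rw [inCompatible_cons_cons_cons] at h
    have he' : Even (wlen (c :: l)) := by
      simpa [wlen, Nat.even_add_one, parity_simps] using he
    have hsplit : (a :: b :: c :: l).reverse = wcomp (c :: l).reverse [c, b, a] := by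
      simp [wcomp]
    rw [hsplit]
    refine inCompatible_wcomp (inCompatible_reverse h.2.2 he') ?_ (by simpa [wlen] using he')
      (by simp)
    exact inCompatible_cons_cons_cons.mpr ⟨h.2.1, h.1, inCompatible_singleton H a⟩

theorem inCompatible_of_backtrack {s : List X} {x y : X} :
    ∀ {H : Dgraph X} {p : List X},
      INCompatible H (p ++ [x, y, x] ++ s) → INCompatible H (p ++ [x] ++ s)
  | _, [], h => by
    simp only [List.nil_append, List.cons_append, inCompatible_cons_cons_cons] at h ⊢
    exact h.2.2
  | _, a :: p, h => by
    rw [List.cons_append, List.cons_append, inCompatible_cons] at h ⊢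
    refine ⟨fun b hb => h.1 b ?_, inCompatible_of_backtrack h.2⟩
    cases p <;> simpa using hb

theorem adj_self_of_inCompatible {s : List X} {x : X} :
    ∀ {H : Dgraph X} {p : List X}, INCompatible H (p ++ [x, x] ++ s) → H.Adj x x
  | _, [], h => by
    simp only [List.nil_append, List.cons_append, inCompatible_cons] at h
    exact h.1 x rfl
  | H, _ :: _, h => by
    rw [List.cons_append, List.cons_append, inCompatible_cons] at h
    exact adj_self_of_inCompatible (H := H.converse) h.2

lemma inCompatible_of_rStep {H : Dgraph X} (hH : H.Loopless) {l l' : List X}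
    (hl : INCompatible H l) (hstep : RStep l l') : INCompatible H l' := by
  rcases hstep with ⟨p, s, x, y, rfl, rfl⟩ | ⟨p, s, x, rfl, -⟩
  · exact inCompatible_of_backtrack hl
  · exact absurd (adj_self_of_inCompatible hl) (hH x)

lemma inCompatible_of_reflTransGen {H : Dgraph X} (hH : H.Loopless) {l l' : List X}
    (hl : INCompatible H l) (hred : ReflTransGen RStep l l') : INCompatible H l' := by
  induction hred with
  | refl => exact hl
  | tail _ hstep ih => exact inCompatible_of_rStep hH ih hstep

lemma inCompatible_wcomp_witer {H : Dgraph X} {R P : List X} {h : X}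
    (hRh : R.head? = some h) (hRl : R.getLast? = some h) (hRe : Even (wlen R))
    (hR : INCompatible H R) (hPh : P.head? = some h) (hP : INCompatible H P) :
    ∀ n, INCompatible H (wcomp (witer R h n) P)
  | 0 => by rwa [witer, singleton_wcomp hPh]
  | n + 1 => by
    have hne : witer R h n ≠ [] := by
      intro hnil; simpa [hnil] using head?_witer hRh n
    rw [witer, wcomp_assoc _ _ hne]
    refine inCompatible_wcomp hR (inCompatible_wcomp_witer hRh hRl hRe hR hPh hP n) hRe ?_
    rw [head?_wcomp _ hne, head?_witer hRh, hRl]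

lemma inCompatible_wcomp_zpowWalk {H : Dgraph X} {R P : List X} {h : X}
    (hRh : R.head? = some h) (hRl : R.getLast? = some h) (hRe : Even (wlen R))
    (hR : INCompatible H R) (hPh : P.head? = some h) (hP : INCompatible H P) (n : ℤ) :
    INCompatible H (wcomp (zpowWalk R h n) P) := by
  unfold zpowWalk
  split_ifs
  · exact inCompatible_wcomp_witer hRh hRl hRe hR hPh hP _
  · have hRe' : Even (wlen R.reverse) := by simpa [wlen] using hRe
    exact inCompatible_wcomp_witer (by simpa using hRl) (by simpa using hRh) hRe'
      (inCompatible_reverse hR hRe) hPh hP _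

theorem inCompatible_of_piEq_wcomp_zpowWalk {H : Dgraph X} {R P Q : List X} {h : X}
    (hRh : R.head? = some h) (hRl : R.getLast? = some h) (hRred : IsReduced R)
    (hRe : Even (wlen R)) (hR : INCompatible H R)
    (hPh : P.head? = some h) (hPred : IsReduced P) (hP : INCompatible H P)
    (n : ℤ) (hQ : IsReduced Q) (hpi : PiEq (wcomp (zpowWalk R h n) P) Q) :
    INCompatible H Q := by
  have hW : INCompatible H.dropLoops (wcomp (zpowWalk R h n) P) :=
    inCompatible_wcomp_zpowWalk hRh hRl hRe (inCompatible_dropLoops hR hRred.isChain_ne) hPh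
      (inCompatible_dropLoops hP hPred.isChain_ne) n
  exact inCompatible_mono (fun _ _ => And.left)
    (inCompatible_of_reflTransGen H.loopless_dropLoops hW (reflTransGen_of_piEq hpi hQ))

lemma wcomp_zpowWalk_zero {R P : List X} {h : X} (hP : P.head? = some h) :
    wcomp (zpowWalk R h 0) P = P :=
  singleton_wcomp hP

lemma inCompatible_iff_forall_piEq_wcomp_zpowWalk {H : Dgraph X} {R P : List X} {h : X}
    (hRh : R.head? = some h) (hRl : R.getLast? = some h) (hRred : IsReduced R)
    (hRe : Even (wlen R)) (hR : INCompatible H R) (hPh : P.head? = some h) (hPred : IsReduced P) :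
    INCompatible H P ↔ ∀ (n : ℤ) (Q : List X), IsReduced Q →
      PiEq (wcomp (zpowWalk R h n) P) Q → INCompatible H Q := by
  refine ⟨fun hP n _ hQ hpi =>
    inCompatible_of_piEq_wcomp_zpowWalk hRh hRl hRred hRe hR hPh hPred hP n hQ hpi,
    fun hall => hall 0 P hPred ?_⟩
  rw [wcomp_zpowWalk_zero hPh]
  exact .refl _

end HRecoloring

theorem statement12_general {X : Type} (H : Dgraph X) (h : X) (b : X)
    (R P : List X)
    (hR : IsWalk H h h R) (hRred : IsReduced R) (hReven : Even (wlen R))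
    (hP : IsWalk H h b P) (hPred : IsReduced P) :
    (INCompatible H R →
      (INCompatible H P ↔
        ∀ (n : ℤ) (Q : List X), IsReduced Q →
          PiEq (wcomp (zpowWalk R h n) P) Q → INCompatible H Q)) ∧
    (OUTCompatible H R →
      (OUTCompatible H P ↔
        ∀ (n : ℤ) (Q : List X), IsReduced Q →
          PiEq (wcomp (zpowWalk R h n) P) Q → OUTCompatible H Q)) := by
  obtain ⟨-, hRh, hRl, -⟩ := hR
  obtain ⟨-, hPh, -⟩ := hP
  refine ⟨fun hRin => inCompatible_iff_forall_piEq_wcomp_zpowWalk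
    hRh hRl hRred hReven hRin hPh hPred, fun hRout => ?_⟩
  simp only [outCompatible_iff_inCompatible_converse] at hRout ⊢
  exact inCompatible_iff_forall_piEq_wcomp_zpowWalk hRh hRl hRred hReven hRout hPh hPred

/-- If a closed reduced even walk `R` based at `h` satisfies the IN-zigzag
pattern, then `P` satisfies the IN-zigzag pattern iff every reduced walk
`RⁿP`, `n ∈ ℤ`, does; analogously for the OUT-zigzag pattern. -/
theorem statement12 {X : Type} (H : Dgraph X) (h : X) (b : X)
    (R P : List X)
    (hR : IsWalk H h h R) (hRred : IsReduced R) (hReven : Even (wlen R))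
    (hP : IsWalk H h b P) (hPred : IsReduced P) (hPeven : Even (wlen P)) :
    (INCompatible H R →
      (INCompatible H P ↔
        ∀ (n : ℤ) (Q : List X), IsReduced Q →
          PiEq (wcomp (zpowWalk R h n) P) Q → INCompatible H Q)) ∧
    (OUTCompatible H R →
      (OUTCompatible H P ↔
        ∀ (n : ℤ) (Q : List X), IsReduced Q →
          PiEq (wcomp (zpowWalk R h n) P) Q → OUTCompatible H Q)) :=
  statement12_general H h b R P hR hRred hReven hP hPred
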